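/- With notation as before, if c(x) = γ^{e-1} A(x) is nonzero with μ(A(x)) ≠ 0, then depth(c(x)) = depth(μ(A(x))). -/

import Mathlib

/-!
Multiplication by `γ^(e-1)` kills exactly the maximal ideal: it kills `γ`, hence every nonunit,
and it kills no unit since `γ^(e-1) ≠ 0`. So `x ↦ γ^(e-1) x` and the residue map are additive maps
with the same kernel. Both commute with the difference operator, so every iterated difference of
`c` vanishes exactly where the corresponding one of `μ(A)` does, and the depths agree.
-/

open IsLocalRing

variable {S : Type*} [CommRing S]

/-- The derivative (difference) operator on sequences/vectors. -/
def der (a : ℕ → S) : ℕ → S := fun k => a (k + 1) - a k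

open Classical in
/-- Depth of a vector `a ∈ S^N`. -/
noncomputable def depth (N : ℕ) (a : ℕ → S) : ℕ :=
  if h : ∃ i, i < N ∧ ∀ k, k < N - i → der^[i] a k = 0 then Nat.find h else N

section

variable {T U : Type*} [CommRing T] [CommRing U]

lemma iterate_der_map (f : S →+ T) (a : ℕ → S) (i : ℕ) :
    der^[i] (fun k => f (a k)) = fun k => f (der^[i] a k) := by
  induction i generalizing a with
  | zero => rfl
  | succ n ih =>
    have hder : der (fun k => f (a k)) = fun k => f (der a k) := by
      funext k
      simp only [der, map_sub]
    rw [Function.iterate_succ_apply, Function.iterate_succ_apply, hder, ih]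

lemma depth_congr {N : ℕ} {a : ℕ → S} {b : ℕ → T}
    (h : ∀ i k, der^[i] a k = 0 ↔ der^[i] b k = 0) : depth N a = depth N b := by
  have hp : ∀ i, (i < N ∧ ∀ k, k < N - i → der^[i] a k = 0) ↔
      (i < N ∧ ∀ k, k < N - i → der^[i] b k = 0) := fun i => by
    simp only [h]
  unfold depth
  by_cases ha : ∃ i, i < N ∧ ∀ k, k < N - i → der^[i] a k = 0
  · rw [dif_pos ha, dif_pos ((exists_congr hp).mp ha)]
    classical exact Nat.find_congr' (hp _)
  · rw [dif_neg ha, dif_neg (mt (exists_congr hp).mpr ha)]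

lemma depth_map_eq_depth_map (f : S →+ T) (g : S →+ U) (hfg : ∀ x, f x = 0 ↔ g x = 0)
    (N : ℕ) (a : ℕ → S) : depth N (fun k => f (a k)) = depth N (fun k => g (a k)) :=
  depth_congr fun i k => by
    rw [iterate_der_map, iterate_der_map]
    exact hfg _

end

lemma mul_eq_zero_iff_mem_maximalIdeal [IsLocalRing S] {γ c : S}
    (hγ : maximalIdeal S = Ideal.span {γ}) (hcγ : c * γ = 0) (hc : c ≠ 0) (x : S) :
    c * x = 0 ↔ x ∈ maximalIdeal S := by
  constructor
  · intro hcx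
    rw [mem_maximalIdeal, mem_nonunits_iff]
    rintro ⟨u, rfl⟩
    exact hc (u.mul_left_eq_zero.mp hcx)
  · intro hx
    rw [hγ, Ideal.mem_span_singleton] at hx
    obtain ⟨y, rfl⟩ := hx
    rw [← mul_assoc, hcγ, zero_mul]

theorem depth_eq_depth_residue_top_general (R : Type*) [CommRing R] [IsLocalRing R]
    (γ : R) (hγ : maximalIdeal R = Ideal.span {γ})
    (e : ℕ) (hnil : γ ^ e = 0) (hnil' : γ ^ (e - 1) ≠ 0)
    (N : ℕ)
    (A : ℕ → R) :
    depth N (fun k => γ ^ (e - 1) * A k) = depth N (fun k => residue R (A k)) := by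
  have he : e ≠ 0 := by
    rintro rfl
    exact hnil' hnil
  have hsocle : γ ^ (e - 1) * γ = 0 := by rw [pow_sub_one_mul he, hnil]
  refine depth_map_eq_depth_map (AddMonoidHom.mulLeft (γ ^ (e - 1)))
    (residue R).toAddMonoidHom (fun x => ?_) N A
  rw [AddMonoidHom.coe_mulLeft, RingHom.toAddMonoidHom_eq_coe, AddMonoidHom.coe_coe,
    residue_eq_zero_iff]
  exact mul_eq_zero_iff_mem_maximalIdeal hγ hsocle hnil' x

theorem depth_eq_depth_residue_top (R : Type*) [CommRing R] [Finite R] [IsLocalRing R]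
    (hchain : ∀ I J : Ideal R, I ≤ J ∨ J ≤ I)
    (γ : R) (hγ : maximalIdeal R = Ideal.span {γ})
    (e : ℕ) (he : 0 < e) (hnil : γ ^ e = 0) (hnil' : γ ^ (e - 1) ≠ 0)
    (lam : R) (hlam : IsUnit lam)
    (N : ℕ) (hN : 0 < N)
    (A : ℕ → R) (hA : ∃ k, k < N ∧ residue R (A k) ≠ 0)
    (hc : ∃ k, k < N ∧ γ ^ (e - 1) * A k ≠ 0) :
    depth N (fun k => γ ^ (e - 1) * A k) = depth N (fun k => residue R (A k)) :=
  depth_eq_depth_residue_top_general R γ hγ e hnil hnil' N A
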